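/- Let X be a geodesic metric space and let γ₁, γ₂ be quasi-geodesic rays in X with γ₁ Morse. Then γ₁ and γ₂ have finite Hausdorff distance if and only if there exists a constant C such that the intersection of the C-neighbourhood of γ₁ with the image of γ₂ is unbounded. -/

import Mathlib

open Set Metric

universe u

/-- `γ` restricted to `I` is a `(lam, eps)`-quasi-geodesic. -/
def IsQuasiGeodesicOn {X : Type*} [MetricSpace X] (γ : ℝ → X) (I : Set ℝ)
    (lam eps : ℝ) : Prop :=
  ∀ s ∈ I, ∀ t ∈ I,
    (1 / lam) * |s - t| - eps ≤ dist (γ s) (γ t) ∧ dist (γ s) (γ t) ≤ lam * |s - t| + eps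

/-- `γ` restricted to `I` is a (unit-speed) geodesic. -/
def IsGeodesicOn {X : Type*} [MetricSpace X] (γ : ℝ → X) (I : Set ℝ) : Prop :=
  ∀ s ∈ I, ∀ t ∈ I, dist (γ s) (γ t) = |s - t|

/-- A metric space is geodesic if any two points are joined by a geodesic. -/
def GeodesicSpace (X : Type*) [MetricSpace X] : Prop :=
  ∀ x y : X, ∃ γ : ℝ → X, γ 0 = x ∧ γ (dist x y) = y ∧ IsGeodesicOn γ (Icc 0 (dist x y))

/-- A Morse gauge: an increasing map `ℝ≥1 × ℝ≥0 → ℝ≥0`, continuous in the second argument. -/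
def IsMorseGauge (M : ℝ → ℝ → ℝ) : Prop :=
  (∀ l e, 1 ≤ l → 0 ≤ e → 0 ≤ M l e) ∧
  (∀ l l' e e', 1 ≤ l → 0 ≤ e → l ≤ l' → e ≤ e' → M l e ≤ M l' e') ∧
  (∀ l, 1 ≤ l → ContinuousOn (fun e => M l e) (Ici 0))

/-- Pointwise partial order on Morse gauges (on the domain `ℝ≥1 × ℝ≥0`). -/
def GaugeLE (M N : ℝ → ℝ → ℝ) : Prop :=
  ∀ l e, 1 ≤ l → 0 ≤ e → M l e ≤ N l e

/-- `γ` restricted to `I` is `M`-Morse: every continuous `(lam, eps)`-quasi-geodesic with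
endpoints on `γ` lies in the closed `M lam eps`-neighbourhood of `γ`. -/
def IsMorseWith {X : Type*} [MetricSpace X] (M : ℝ → ℝ → ℝ) (γ : ℝ → X) (I : Set ℝ) : Prop :=
  ∀ lam eps : ℝ, 1 ≤ lam → 0 ≤ eps →
    ∀ (η : ℝ → X) (a b : ℝ), a ≤ b →
      ContinuousOn η (Icc a b) → IsQuasiGeodesicOn η (Icc a b) lam eps →
      η a ∈ γ '' I → η b ∈ γ '' I →
      ∀ t ∈ Icc a b, ∃ s ∈ I, dist (η t) (γ s) ≤ M lam eps

/-- The constant `δ_M` associated to a Morse gauge `M`. -/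
def morseDelta (M : ℝ → ℝ → ℝ) : ℝ :=
  max (4 * M 1 (2 * M 5 0) + 2 * M 5 0) (8 * M 3 0)


/-!
If the Hausdorff distance is finite, a neighbourhood of `γ₁` contains the whole ray `γ₂`,
which is unbounded.

Conversely, pick points `γ₂ t` with `t` arbitrarily large lying within `C` of `γ₁`. Closing
`γ₂` on `[0, t]` up by geodesics from `γ₁ 0` to `γ₂ 0` and from `γ₂ t` to a point of `γ₁` gives
quasi-geodesics with endpoints on `γ₁` and constants independent of `t`, so the Morse property
puts all of `γ₂` in a uniform neighbourhood of `γ₁`. A coarse projection `n ↦ p n` of the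
points `γ₂ n` to `γ₁` then moves by bounded steps and tends to infinity, so it comes uniformly
close to every parameter of `γ₁`.
-/

section QuasiGeodesic

variable {X : Type*} [MetricSpace X]

theorem IsQuasiGeodesicOn.mono {γ : ℝ → X} {I J : Set ℝ} {lam eps eps' : ℝ}
    (h : IsQuasiGeodesicOn γ I lam eps) (hJI : J ⊆ I) (heps : eps ≤ eps') :
    IsQuasiGeodesicOn γ J lam eps' := fun s hs t ht ↦ by
  obtain ⟨hlo, hhi⟩ := h s (hJI hs) t (hJI ht)
  constructor <;> linarith

theorem IsQuasiGeodesicOn.congr {γ γ' : ℝ → X} {I : Set ℝ} {lam eps : ℝ}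
    (h : IsQuasiGeodesicOn γ I lam eps) (hγ : EqOn γ γ' I) :
    IsQuasiGeodesicOn γ' I lam eps := fun s hs t ht ↦ by
  rw [← hγ hs, ← hγ ht]
  exact h s hs t ht

theorem IsQuasiGeodesicOn.abs_sub_le {γ : ℝ → X} {I : Set ℝ} {lam eps : ℝ}
    (h : IsQuasiGeodesicOn γ I lam eps) (hlam : 0 < lam) {s t : ℝ} (hs : s ∈ I) (ht : t ∈ I) :
    |s - t| ≤ lam * (dist (γ s) (γ t) + eps) := by
  have hlo := (h s hs t ht).1
  rw [div_mul_eq_mul_div, one_mul, sub_le_iff_le_add, div_le_iff₀ hlam] at hlo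
  linarith

theorem IsQuasiGeodesicOn.exists_nat_lt_dist {γ : ℝ → X} {lam eps : ℝ}
    (h : IsQuasiGeodesicOn γ (Ici 0) lam eps) (hlam : 0 < lam) (R : ℝ) :
    ∃ n : ℕ, R < dist (γ n) (γ 0) := by
  obtain ⟨n, hn⟩ := exists_nat_gt (lam * (R + eps))
  refine ⟨n, ?_⟩
  have hlo := (h n (mem_Ici.2 n.cast_nonneg) 0 self_mem_Ici).1
  rw [sub_zero, abs_of_nonneg (Nat.cast_nonneg n), div_mul_eq_mul_div, one_mul] at hlo
  have : R + eps < n / lam := by rwa [lt_div_iff₀ hlam, mul_comm]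
  linarith

theorem IsQuasiGeodesicOn.not_isBounded_image {γ : ℝ → X} {lam eps : ℝ}
    (h : IsQuasiGeodesicOn γ (Ici 0) lam eps) (hlam : 0 < lam) :
    ¬ Bornology.IsBounded (γ '' Ici 0) := fun hb ↦ by
  obtain ⟨r, hr⟩ := hb.subset_closedBall (γ 0)
  obtain ⟨n, hn⟩ := h.exists_nat_lt_dist hlam r
  exact hn.not_ge (hr ⟨n, mem_Ici.2 n.cast_nonneg, rfl⟩)

theorem IsGeodesicOn.isQuasiGeodesicOn {γ : ℝ → X} {I : Set ℝ} {lam : ℝ}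
    (h : IsGeodesicOn γ I) (hlam : 1 ≤ lam) : IsQuasiGeodesicOn γ I lam 0 := fun s hs t ht ↦ by
  have hinv : 1 / lam ≤ 1 := by rw [div_le_one (by linarith)]; exact hlam
  have habs := abs_nonneg (s - t)
  rw [h s hs t ht]
  constructor <;> nlinarith

theorem IsGeodesicOn.continuousOn {γ : ℝ → X} {I : Set ℝ} (h : IsGeodesicOn γ I) :
    ContinuousOn γ I :=
  (LipschitzOnWith.of_dist_le_mul fun s hs t ht ↦ by
    simp [h s hs t ht, Real.dist_eq] : LipschitzOnWith 1 γ I).continuousOn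

theorem GeodesicSpace.exists_isGeodesicOn (hX : GeodesicSpace X) (x y : X) (a : ℝ) :
    ∃ σ : ℝ → X, σ a = x ∧ σ (a + dist x y) = y ∧ IsGeodesicOn σ (Icc a (a + dist x y)) := by
  obtain ⟨σ, hσx, hσy, hσ⟩ := hX x y
  refine ⟨fun t ↦ σ (t - a), by simpa using hσx, by simpa using hσy, fun s hs t ht ↦ ?_⟩
  rw [hσ (s - a) ⟨by linarith [hs.1], by linarith [hs.2]⟩ (t - a)
    ⟨by linarith [ht.1], by linarith [ht.2]⟩]
  congr 1
  ring

end QuasiGeodesic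

section Concat

variable {X : Type*}

noncomputable def concatAt (f g : ℝ → X) (b : ℝ) : ℝ → X := fun t ↦ if t ≤ b then f t else g t

theorem concatAt_eqOn_Iic (f g : ℝ → X) (b : ℝ) : EqOn (concatAt f g b) f (Iic b) :=
  fun _ ht ↦ if_pos ht

theorem concatAt_eqOn_Ici {f g : ℝ → X} {b : ℝ} (hfg : f b = g b) :
    EqOn (concatAt f g b) g (Ici b) := fun t ht ↦ by
  rcases (mem_Ici.1 ht).eq_or_lt with rfl | hbt
  · exact (if_pos le_rfl).trans hfg
  · exact if_neg hbt.not_ge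

variable [MetricSpace X]

/-- Crossing the junction costs `2 * lam * B`: the triangle inequality through `η b`, where the
short piece contributes at most `lam * B` to the distance and `B` to the parameter. -/
theorem IsQuasiGeodesicOn.union_Icc {η : ℝ → X} {a b c lam eps₁ eps₂ B : ℝ}
    (hlam : 1 ≤ lam) (heps₁ : 0 ≤ eps₁) (heps₂ : 0 ≤ eps₂) (hab : a ≤ b) (hbc : b ≤ c)
    (hshort : b - a ≤ B ∨ c - b ≤ B)
    (h₁ : IsQuasiGeodesicOn η (Icc a b) lam eps₁) (h₂ : IsQuasiGeodesicOn η (Icc b c) lam eps₂) :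
    IsQuasiGeodesicOn η (Icc a c) lam (eps₁ + eps₂ + 2 * lam * B) := by
  have hB : 0 ≤ lam * B := by
    rcases hshort with h | h <;> exact mul_nonneg (by linarith) (by linarith)
  have hinv : 1 / lam ≤ lam := ((div_le_one (by linarith)).2 hlam).trans hlam
  have cross : ∀ u ∈ Icc a b, ∀ v ∈ Icc b c,
      (1 / lam) * |u - v| - (eps₁ + eps₂ + 2 * lam * B) ≤ dist (η u) (η v) ∧
      dist (η u) (η v) ≤ lam * |u - v| + (eps₁ + eps₂ + 2 * lam * B) := by
    intro u hu v hv
    obtain ⟨hlo₁, hhi₁⟩ := h₁ u hu b ⟨hab, le_rfl⟩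
    obtain ⟨hlo₂, hhi₂⟩ := h₂ b ⟨le_rfl, hbc⟩ v hv
    rw [abs_of_nonpos (by linarith [hu.2]), neg_sub] at hlo₁ hhi₁
    rw [abs_of_nonpos (by linarith [hv.1]), neg_sub] at hlo₂ hhi₂
    rw [abs_of_nonpos (by linarith [hu.2, hv.1]), neg_sub]
    have hsplit : 1 / lam * (v - u) = 1 / lam * (b - u) + 1 / lam * (v - b) := by ring
    have hshrink : ∀ x, 0 ≤ x → 1 / lam * x ≤ lam * x := fun x hx ↦
      mul_le_mul_of_nonneg_right hinv hx
    refine ⟨?_, by linarith [dist_triangle (η u) (η b) (η v)]⟩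
    rcases hshort with h | h
    · have := hshrink (b - u) (by linarith [hu.2])
      have : lam * (b - u) ≤ lam * B := by gcongr; linarith [hu.1]
      linarith [dist_triangle (η b) (η u) (η v), dist_comm (η b) (η u)]
    · have := hshrink (v - b) (by linarith [hv.1])
      have : lam * (v - b) ≤ lam * B := by gcongr; linarith [hv.2]
      linarith [dist_triangle (η u) (η v) (η b), dist_comm (η v) (η b)]
  intro s hs t ht
  rcases le_total s b with hsb | hbs <;> rcases le_total t b with htb | hbt
  · obtain ⟨hlo, hhi⟩ := h₁ s ⟨hs.1, hsb⟩ t ⟨ht.1, htb⟩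
    constructor <;> linarith
  · exact cross s ⟨hs.1, hsb⟩ t ⟨hbt, ht.2⟩
  · rw [dist_comm, abs_sub_comm]
    exact cross t ⟨ht.1, htb⟩ s ⟨hbs, hs.2⟩
  · obtain ⟨hlo, hhi⟩ := h₂ s ⟨hbs, hs.2⟩ t ⟨hbt, ht.2⟩
    constructor <;> linarith

variable {f g : ℝ → X} {a b c : ℝ}

theorem ContinuousOn.concatAt (hab : a ≤ b) (hbc : b ≤ c) (hfg : f b = g b)
    (hf : ContinuousOn f (Icc a b)) (hg : ContinuousOn g (Icc b c)) :
    ContinuousOn (concatAt f g b) (Icc a c) := by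
  rw [← Icc_union_Icc_eq_Icc hab hbc]
  exact ContinuousOn.union_of_isClosed
    (hf.congr ((concatAt_eqOn_Iic f g b).mono Icc_subset_Iic_self))
    (hg.congr ((concatAt_eqOn_Ici hfg).mono Icc_subset_Ici_self)) isClosed_Icc isClosed_Icc

theorem IsQuasiGeodesicOn.concatAt {lam eps₁ eps₂ B : ℝ} (hlam : 1 ≤ lam) (heps₁ : 0 ≤ eps₁)
    (heps₂ : 0 ≤ eps₂) (hab : a ≤ b) (hbc : b ≤ c) (hshort : b - a ≤ B ∨ c - b ≤ B)
    (hfg : f b = g b) (hf : IsQuasiGeodesicOn f (Icc a b) lam eps₁)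
    (hg : IsQuasiGeodesicOn g (Icc b c) lam eps₂) :
    IsQuasiGeodesicOn (concatAt f g b) (Icc a c) lam (eps₁ + eps₂ + 2 * lam * B) :=
  IsQuasiGeodesicOn.union_Icc hlam heps₁ heps₂ hab hbc hshort
    (hf.congr ((concatAt_eqOn_Iic f g b).mono Icc_subset_Iic_self).symm)
    (hg.congr ((concatAt_eqOn_Ici hfg).mono Icc_subset_Ici_self).symm)

end Concat

section Morse

variable {X : Type*} [MetricSpace X]

theorem IsMorseWith.exists_dist_le (hX : GeodesicSpace X) {M : ℝ → ℝ → ℝ} {γ : ℝ → X}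
    {I : Set ℝ} (hMorse : IsMorseWith M γ I) {η : ℝ → X} {a b lam eps : ℝ} (hab : a ≤ b)
    (hlam : 1 ≤ lam) (heps : 0 ≤ eps) (hcont : ContinuousOn η (Icc a b))
    (hqg : IsQuasiGeodesicOn η (Icc a b) lam eps) {s s' : ℝ} (hs : s ∈ I) (hs' : s' ∈ I)
    {t : ℝ} (ht : t ∈ Icc a b) :
    ∃ r ∈ I, dist (η t) (γ r) ≤ M lam (eps + 2 * lam * (dist (γ s) (η a) + dist (η b) (γ s'))) := by
  set d₀ := dist (γ s) (η a)
  set d₁ := dist (η b) (γ s')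
  have hd₀ : 0 ≤ d₀ := dist_nonneg
  have hd₁ : 0 ≤ d₁ := dist_nonneg
  obtain ⟨σ₀, hσ₀s, hσ₀a, hσ₀⟩ := hX.exists_isGeodesicOn (γ s) (η a) (a - d₀)
  rw [sub_add_cancel] at hσ₀a hσ₀
  obtain ⟨σ₁, hσ₁b, hσ₁s', hσ₁⟩ := hX.exists_isGeodesicOn (η b) (γ s') b
  set η₀ := concatAt σ₀ η a
  set η₁ := concatAt η₀ σ₁ b
  have hη₀b : η₀ b = σ₁ b := (concatAt_eqOn_Ici hσ₀a (mem_Ici.2 hab)).trans hσ₁b.symm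
  have hcont₁ : ContinuousOn η₁ (Icc (a - d₀) (b + d₁)) :=
    (hσ₀.continuousOn.concatAt (by linarith) hab hσ₀a hcont).concatAt (by linarith)
      (by linarith) hη₀b hσ₁.continuousOn
  have hqg₁ : IsQuasiGeodesicOn η₁ (Icc (a - d₀) (b + d₁)) lam
      (eps + 2 * lam * (d₀ + d₁)) :=
    (((hσ₀.isQuasiGeodesicOn hlam).concatAt hlam le_rfl heps (by linarith) hab
      (Or.inl le_rfl) hσ₀a hqg).concatAt hlam (by nlinarith) le_rfl (by linarith)
      (by linarith) (Or.inr (by linarith)) hη₀b (hσ₁.isQuasiGeodesicOn hlam)).mono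
      subset_rfl (le_of_eq (by ring))
  have hstart : η₁ (a - d₀) = γ s :=
    (concatAt_eqOn_Iic _ _ _ (mem_Iic.2 (by linarith))).trans
      ((concatAt_eqOn_Iic _ _ _ (mem_Iic.2 (by linarith))).trans hσ₀s)
  have hend : η₁ (b + d₁) = γ s' :=
    (concatAt_eqOn_Ici hη₀b (mem_Ici.2 (by linarith))).trans hσ₁s'
  have hηt : η₁ t = η t :=
    (concatAt_eqOn_Iic _ _ _ (mem_Iic.2 ht.2)).trans (concatAt_eqOn_Ici hσ₀a (mem_Ici.2 ht.1))
  obtain ⟨r, hr, hdist⟩ := hMorse lam _ hlam (by positivity) η₁ (a - d₀) (b + d₁) (by linarith)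
    hcont₁ hqg₁ ⟨s, hs, hstart.symm⟩ ⟨s', hs', hend.symm⟩ t
    ⟨by linarith [ht.1], by linarith [ht.2]⟩
  exact ⟨r, hr, hηt ▸ hdist⟩

end Morse

theorem exists_abs_sub_le_of_le_add {f : ℕ → ℝ} {J s : ℝ} (hstep : ∀ n, f (n + 1) ≤ f n + J)
    (hunb : ∀ R, ∃ n, R < f n) (hs : 0 ≤ s) : ∃ n, |s - f n| ≤ max J (f 0) := by
  classical
  rcases lt_or_ge s (f 0) with h0 | h0
  · exact ⟨0, by rw [abs_of_neg (by linarith)]; exact le_max_of_le_right (by linarith)⟩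
  obtain ⟨m, hm⟩ : ∃ m, Nat.find (hunb s) = m + 1 :=
    Nat.exists_eq_succ_of_ne_zero fun h ↦ h0.not_gt (Nat.find_eq_zero _ |>.1 h)
  have hle : f m ≤ s := not_lt.1 (Nat.find_min (hunb s) (by omega))
  have hlt : s < f (m + 1) := hm ▸ Nat.find_spec (hunb s)
  exact ⟨m, by rw [abs_of_nonneg (by linarith)]; exact le_max_of_le_left (by linarith [hstep m])⟩

section Rays

variable {X : Type*} [MetricSpace X]

theorem exists_forall_dist_le_of_hausdorffEDist_ne_top {s t : Set X}
    (h : hausdorffEDist s t ≠ ⊤) : ∃ C, ∀ y ∈ t, ∃ x ∈ s, dist y x ≤ C :=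
  ⟨hausdorffDist s t + 1, fun y hy ↦
    let ⟨x, hx, hxy⟩ := exists_dist_lt_of_hausdorffDist_lt' hy (lt_add_one _) h
    ⟨x, hx, by rw [dist_comm]; exact hxy.le⟩⟩

theorem hausdorffEDist_image_ne_top {ι κ : Type*} {f : ι → X} {g : κ → X} {I : Set ι}
    {J : Set κ} {D E : ℝ} (hf : ∀ i ∈ I, ∃ j ∈ J, dist (f i) (g j) ≤ E)
    (hg : ∀ j ∈ J, ∃ i ∈ I, dist (g j) (f i) ≤ D) : hausdorffEDist (f '' I) (g '' J) ≠ ⊤ := by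
  refine ne_top_of_le_ne_top ENNReal.ofReal_ne_top
    (hausdorffEDist_le_of_mem_edist (r := ENNReal.ofReal (max D E)) ?_ ?_)
  · rintro _ ⟨i, hi, rfl⟩
    obtain ⟨j, hj, hdist⟩ := hf i hi
    exact ⟨g j, mem_image_of_mem g hj,
      by rw [edist_dist]; exact ENNReal.ofReal_le_ofReal (hdist.trans (le_max_right _ _))⟩
  · rintro _ ⟨j, hj, rfl⟩
    obtain ⟨i, hi, hdist⟩ := hg j hj
    exact ⟨f i, mem_image_of_mem f hi,
      by rw [edist_dist]; exact ENNReal.ofReal_le_ofReal (hdist.trans (le_max_left _ _))⟩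

theorem ContinuousOn.exists_ge_mem_of_not_isBounded {f : ℝ → X} {a : ℝ} {S : Set X}
    (hf : ContinuousOn f (Ici a)) (hS : ¬ Bornology.IsBounded (f '' Ici a ∩ S)) (u : ℝ) :
    ∃ t ∈ Ici a, u ≤ t ∧ f t ∈ S := by
  by_contra! h
  have hbdd : Bornology.IsBounded (f '' Icc a u) :=
    (isCompact_Icc.image_of_continuousOn (hf.mono Icc_subset_Ici_self)).isBounded
  refine hS (hbdd.subset ?_)
  rintro _ ⟨⟨t, ht, rfl⟩, hft⟩
  exact ⟨t, ⟨ht, (not_le.1 fun hut ↦ h t ht hut hft).le⟩, rfl⟩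

theorem IsQuasiGeodesicOn.exists_forall_dist_le_of_forall_dist_le {γ₁ γ₂ : ℝ → X}
    {C₁ eps₁ C₂ eps₂ D : ℝ} (hqg₁ : IsQuasiGeodesicOn γ₁ (Ici 0) C₁ eps₁) (hC₁ : 0 < C₁)
    (hqg₂ : IsQuasiGeodesicOn γ₂ (Ici 0) C₂ eps₂) (hC₂ : 0 < C₂)
    (hD : ∀ u ∈ Ici (0 : ℝ), ∃ s ∈ Ici (0 : ℝ), dist (γ₂ u) (γ₁ s) ≤ D) :
    ∃ E, ∀ s ∈ Ici (0 : ℝ), ∃ u ∈ Ici (0 : ℝ), dist (γ₁ s) (γ₂ u) ≤ E := by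
  choose p hp hpD using fun n : ℕ ↦ hD n (mem_Ici.2 n.cast_nonneg)
  have hclose : ∀ m n : ℕ,
      |dist (γ₂ m) (γ₂ n) - dist (γ₁ (p m)) (γ₁ (p n))| ≤ 2 * D := fun m n ↦ by
    rw [← Real.dist_eq]
    linarith [dist_dist_dist_le (γ₂ m) (γ₂ n) (γ₁ (p m)) (γ₁ (p n)), hpD m, hpD n]
  have hstep : ∀ n, p (n + 1) ≤ p n + C₁ * (C₂ + eps₂ + 2 * D + eps₁) := fun n ↦ by
    have hpar := hqg₁.abs_sub_le hC₁ (hp (n + 1)) (hp n)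
    have hγ₂ := (hqg₂ _ (mem_Ici.2 (n + 1).cast_nonneg) _ (mem_Ici.2 n.cast_nonneg)).2
    have hclose' := hclose (n + 1) n
    rw [Nat.cast_succ, add_sub_cancel_left, abs_one, mul_one] at hγ₂
    rw [Nat.cast_succ] at hclose'
    have : C₁ * (dist (γ₁ (p (n + 1))) (γ₁ (p n)) + eps₁) ≤ C₁ * (C₂ + eps₂ + 2 * D + eps₁) := by
      gcongr
      linarith [(abs_le.1 hclose').1]
    linarith [le_abs_self (p (n + 1) - p n)]
  have hunb : ∀ R, ∃ n, R < p n := fun R ↦ by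
    by_contra! hbdd
    obtain ⟨n, hn⟩ := hqg₂.exists_nat_lt_dist hC₂ (C₁ * (R + p 0) + eps₁ + 2 * D)
    have hγ₁ := (hqg₁ _ (hp n) _ (hp 0)).2
    have : C₁ * |p n - p 0| ≤ C₁ * (R + p 0) := by
      gcongr
      rw [abs_sub_le_iff]
      constructor <;> linarith [mem_Ici.1 (hp n), mem_Ici.1 (hp 0), hbdd n, hbdd 0]
    have hclose' := hclose n 0
    rw [Nat.cast_zero] at hclose'
    linarith [(abs_le.1 hclose').2]
  refine ⟨C₁ * max (C₁ * (C₂ + eps₂ + 2 * D + eps₁)) (p 0) + eps₁ + D, fun s hs ↦ ?_⟩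
  obtain ⟨n, hn⟩ := exists_abs_sub_le_of_le_add hstep hunb hs
  refine ⟨n, mem_Ici.2 n.cast_nonneg, ?_⟩
  have hγ₁ := (hqg₁ s hs _ (hp n)).2
  have : C₁ * |s - p n| ≤ C₁ * max (C₁ * (C₂ + eps₂ + 2 * D + eps₁)) (p 0) := by gcongr
  linarith [dist_triangle (γ₁ s) (γ₁ (p n)) (γ₂ n), dist_comm (γ₁ (p n)) (γ₂ n), hpD n]

end Rays

theorem IsMorseWith.exists_forall_dist_le_of_not_isBounded {X : Type*} [MetricSpace X]
    (hX : GeodesicSpace X) {M : ℝ → ℝ → ℝ} (hM : IsMorseGauge M) {γ₁ γ₂ : ℝ → X}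
    (hMorse : IsMorseWith M γ₁ (Ici 0)) {C₂ eps₂ C : ℝ} (hC₂ : 1 ≤ C₂) (heps₂ : 0 ≤ eps₂)
    (hcont₂ : ContinuousOn γ₂ (Ici 0)) (hqg₂ : IsQuasiGeodesicOn γ₂ (Ici 0) C₂ eps₂)
    (hC : ¬ Bornology.IsBounded ((γ₂ '' Ici 0) ∩ {x | ∃ s ∈ Ici (0 : ℝ), dist x (γ₁ s) ≤ C})) :
    ∃ D, ∀ u ∈ Ici (0 : ℝ), ∃ s ∈ Ici (0 : ℝ), dist (γ₂ u) (γ₁ s) ≤ D := by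
  refine ⟨M C₂ (eps₂ + 2 * C₂ * (dist (γ₁ 0) (γ₂ 0) + C)), fun u hu ↦ ?_⟩
  obtain ⟨t, ht, hut, s, hs, hts⟩ := hcont₂.exists_ge_mem_of_not_isBounded hC u
  obtain ⟨r, hr, hdist⟩ := hMorse.exists_dist_le hX (mem_Ici.1 ht) hC₂ heps₂
    (hcont₂.mono Icc_subset_Ici_self) (hqg₂.mono Icc_subset_Ici_self le_rfl) self_mem_Ici hs
    ⟨mem_Ici.1 hu, hut⟩
  refine ⟨r, hr, hdist.trans (hM.2.1 _ _ _ _ hC₂ (by positivity) le_rfl ?_)⟩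
  gcongr

theorem statement7_general {X : Type u} [MetricSpace X] (hX : GeodesicSpace X)
    (γ₁ γ₂ : ℝ → X) (C₁ eps₁ C₂ eps₂ : ℝ) (M : ℝ → ℝ → ℝ)
    (hC₁ : 1 ≤ C₁) (hC₂ : 1 ≤ C₂) (he₂ : 0 ≤ eps₂)
    (hcont₂ : ContinuousOn γ₂ (Ici 0))
    (hqg₁ : IsQuasiGeodesicOn γ₁ (Ici 0) C₁ eps₁)
    (hqg₂ : IsQuasiGeodesicOn γ₂ (Ici 0) C₂ eps₂)
    (hM : IsMorseGauge M) (hMorse : IsMorseWith M γ₁ (Ici 0)) :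
    EMetric.hausdorffEdist (γ₁ '' Ici 0) (γ₂ '' Ici 0) ≠ ⊤ ↔
      ∃ C : ℝ, ¬ Bornology.IsBounded
        ((γ₂ '' Ici 0) ∩ {x | ∃ s ∈ Ici (0 : ℝ), dist x (γ₁ s) ≤ C}) := by
  constructor
  · intro h
    obtain ⟨C, hC⟩ := exists_forall_dist_le_of_hausdorffEDist_ne_top h
    refine ⟨C, fun hb ↦ hqg₂.not_isBounded_image (by linarith) (hb.subset ?_)⟩
    rintro _ ⟨u, hu, rfl⟩
    obtain ⟨_, ⟨s, hs, rfl⟩, hdist⟩ := hC _ (mem_image_of_mem γ₂ hu)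
    exact ⟨mem_image_of_mem γ₂ hu, s, hs, hdist⟩
  · rintro ⟨C, hC⟩
    obtain ⟨D, hD⟩ :=
      hMorse.exists_forall_dist_le_of_not_isBounded hX hM hC₂ he₂ hcont₂ hqg₂ hC
    obtain ⟨E, hE⟩ :=
      hqg₁.exists_forall_dist_le_of_forall_dist_le (by linarith) hqg₂ (by linarith) hD
    exact hausdorffEDist_image_ne_top hE hD

/-- For quasi-geodesic rays `γ₁, γ₂` with `γ₁` Morse, `γ₁` and `γ₂` have finite
Hausdorff distance iff for some constant `C` the intersection of the `C`-neighbourhood of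
`γ₁` with the image of `γ₂` is unbounded. -/
theorem statement7 {X : Type u} [MetricSpace X] (hX : GeodesicSpace X)
    (γ₁ γ₂ : ℝ → X) (C₁ eps₁ C₂ eps₂ : ℝ) (M : ℝ → ℝ → ℝ)
    (hC₁ : 1 ≤ C₁) (he₁ : 0 ≤ eps₁) (hC₂ : 1 ≤ C₂) (he₂ : 0 ≤ eps₂)
    (hcont₁ : ContinuousOn γ₁ (Ici 0)) (hcont₂ : ContinuousOn γ₂ (Ici 0))
    (hqg₁ : IsQuasiGeodesicOn γ₁ (Ici 0) C₁ eps₁)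
    (hqg₂ : IsQuasiGeodesicOn γ₂ (Ici 0) C₂ eps₂)
    (hM : IsMorseGauge M) (hMorse : IsMorseWith M γ₁ (Ici 0)) :
    EMetric.hausdorffEdist (γ₁ '' Ici 0) (γ₂ '' Ici 0) ≠ ⊤ ↔
      ∃ C : ℝ, ¬ Bornology.IsBounded
        ((γ₂ '' Ici 0) ∩ {x | ∃ s ∈ Ici (0 : ℝ), dist x (γ₁ s) ≤ C}) :=
  statement7_general hX γ₁ γ₂ C₁ eps₁ C₂ eps₂ M hC₁ hC₂ he₂ hcont₂ hqg₁ hqg₂ hM hMorse
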